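/- arXiv:1202.0533 — 2 statements merged into one kernel-verified Lean document; each statement's English description precedes it below -/
import Mathlib

section
/- (Second-order photon efficiency of the BPSK Holevo capacity.) Let h(x) = -x ln x - (1-x) ln(1-x) (binary entropy in nats, 0 ln 0 = 0) and C∞(E) = h((1 + e^{-2E})/2). Then lim_{E → 0⁺} ( C∞(E) + E ln E - E ) / ( E² ln E ) = 1, i.e. C∞(E)/E = -ln E + 1 + E ln E + o(E ln E) nats per photon as E → 0⁺. -/
/-!
Let `q = (1 - e^{-2E})/2`, so that `C∞(E) = h(q)`, and `q = E - E² + O(E³)` by Taylor's theorem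
for `exp`. Writing `-q ln q = -q ln (q/E) - q ln E`, the elementary bounds `1 - 1/x ≤ ln x ≤ x - 1`
show that `h(q) + E ln E - E - E² ln E = O(E²)`, where the `E³ ln E` error is absorbed by
`|E ln E| < 1`. Since `E² = o(E² ln E)`, the quotient tends to `1`.
-/

open Filter Topology Asymptotics Real

theorem Real.mul_log_le_mul_sub_one {x : ℝ} (hx : 0 ≤ x) : x * log x ≤ x * (x - 1) := by
  rcases hx.eq_or_lt with rfl | hx
  · simp
  · exact mul_le_mul_of_nonneg_left (log_le_sub_one_of_pos hx) hx.le

theorem abs_one_sub_exp_neg_two_mul_div_two_sub_le {E : ℝ} (hE : 0 ≤ E) (hE' : E ≤ 1 / 2) :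
    |(1 - exp (-(2 * E))) / 2 - (E - E ^ 2)| ≤ E ^ 3 := by
  have htaylor := Real.exp_bound (x := -(2 * E)) (by rw [abs_of_nonpos (by linarith)]; linarith)
    (n := 3) (by norm_num)
  simp only [Finset.sum_range_succ, Finset.sum_range_zero,
    abs_of_nonpos (by linarith : -(2 * E) ≤ 0)] at htaylor
  norm_num at htaylor
  have hsplit : (1 - exp (-(2 * E))) / 2 - (E - E ^ 2)
      = -(exp (-(2 * E)) - (1 + -(2 * E) + (2 * E) ^ 2 / 2)) / 2 := by ring
  rw [hsplit, abs_div, abs_neg, abs_two, div_le_iff₀ two_pos]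
  nlinarith [pow_nonneg hE 3]

theorem abs_binEntropy_add_mul_log_sub_le {q E : ℝ} (hq : 0 ≤ q) (hE : 0 < E) (hE1 : E ≤ 1)
    (hclose : |q - (E - E ^ 2)| ≤ E ^ 3) :
    |binEntropy q + E * log E - E - E ^ 2 * log E| ≤ 6 * E ^ 2 := by
  obtain ⟨hclose_lo, hclose_hi⟩ := abs_le.mp hclose
  have hcube : E ^ 3 ≤ E ^ 2 := pow_le_pow_of_le_one hE.le hE1 (by norm_num)
  have hqE : q ≤ E := by linarith
  have hgap : E - q ≤ 2 * E ^ 2 := by linarith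
  have hratio : q * log (q / E) = E * ((q / E) * log (q / E)) := by field_simp
  have hratio_lo : q - E ≤ q * log (q / E) := by
    have := self_sub_one_le_mul_log (div_nonneg hq hE.le)
    rw [hratio]; nlinarith [mul_div_cancel₀ q hE.ne']
  have hratio_hi : q * log (q / E) ≤ 0 :=
    mul_nonpos_of_nonneg_of_nonpos hq (log_nonpos (div_nonneg hq hE.le) ((div_le_one hE).mpr hqE))
  have hlogE : |(q - (E - E ^ 2)) * log E| ≤ E ^ 2 := by
    have hmul := abs_log_mul_self_lt E hE hE1
    rw [abs_mul]
    calc |q - (E - E ^ 2)| * |log E| ≤ E ^ 3 * |log E| := by gcongr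
      _ = E ^ 2 * |log E * E| := by rw [abs_mul, abs_of_pos hE]; ring
      _ ≤ E ^ 2 := mul_le_of_le_one_right (by positivity) hmul.le
  have hcompl_lo : 0 ≤ (1 - q) * log (1 - q) + q := by
    linarith [self_sub_one_le_mul_log (x := 1 - q) (by linarith)]
  have hcompl_hi : (1 - q) * log (1 - q) + q ≤ E ^ 2 := by
    have := mul_log_le_mul_sub_one (x := 1 - q) (by linarith)
    nlinarith
  have hdecomp : binEntropy q + E * log E - E - E ^ 2 * log E
      = -(q * log (q / E)) - (q - (E - E ^ 2)) * log E + (q - E)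
        - ((1 - q) * log (1 - q) + q) := by
    rcases hq.eq_or_lt with rfl | hq
    · simp only [binEntropy_zero, zero_div, log_zero, mul_zero, sub_zero, log_one]
      ring
    · rw [binEntropy, log_div hq.ne' hE.ne', log_inv, log_inv]; ring
  rw [hdecomp]
  have := abs_le.mp hlogE
  rw [abs_le]; constructor <;> linarith

theorem isLittleO_sq_sq_mul_log_nhdsGT_zero :
    (fun E : ℝ => E ^ 2) =o[𝓝[>] 0] (fun E => E ^ 2 * log E) := by
  have hlog : (fun _ : ℝ => (1 : ℝ)) =o[𝓝[>] 0] log :=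
    (isLittleO_one_left_iff (F := ℝ)).mpr <| by
      simpa only [Function.comp_def, norm_eq_abs] using
        tendsto_abs_atBot_atTop.comp tendsto_log_nhdsGT_zero
  simpa using (isBigO_refl (fun E : ℝ => E ^ 2) _).mul_isLittleO hlog

theorem isBigO_binEntropy_bpsk_remainder :
    (fun E => binEntropy ((1 + exp (-(2 * E))) / 2) + E * log E - E - E ^ 2 * log E)
      =O[𝓝[>] 0] (fun E => E ^ 2) := by
  refine IsBigO.of_bound 6 (eventually_of_mem (Ioo_mem_nhdsGT (by norm_num : (0 : ℝ) < 1 / 2))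
    fun E ⟨hE0, hE1⟩ => ?_)
  have hclose := abs_one_sub_exp_neg_two_mul_div_two_sub_le hE0.le hE1.le
  have hq : 0 ≤ (1 - exp (-(2 * E))) / 2 := by
    linarith [exp_le_one_iff.mpr (by linarith : -(2 * E) ≤ 0)]
  have := abs_binEntropy_add_mul_log_sub_le hq hE0 (by linarith) hclose
  rwa [show (1 + exp (-(2 * E))) / 2 = 1 - (1 - exp (-(2 * E))) / 2 by ring,
    binEntropy_one_sub, norm_pow, norm_eq_abs, norm_eq_abs, sq_abs]

/-- Second-order photon efficiency of the BPSK Holevo capacity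
`C∞(E) = h((1 + e^{-2E})/2)`: `(C∞(E) + E ln E - E)/(E² ln E) → 1` as `E → 0⁺`. -/
theorem bpsk_holevo_photon_efficiency_second_order :
    Tendsto
      (fun E : ℝ =>
        (Real.binEntropy ((1 + Real.exp (-(2 * E))) / 2) + E * Real.log E - E)
          / (E ^ 2 * Real.log E))
      (𝓝[>] 0) (𝓝 1) := by
  have hlim := ((isBigO_binEntropy_bpsk_remainder.trans_isLittleO
    isLittleO_sq_sq_mul_log_nhdsGT_zero).tendsto_div_nhds_zero).const_add 1
  rw [add_zero] at hlim
  refine hlim.congr' (eventually_of_mem (Ioo_mem_nhdsGT one_pos) fun E ⟨hE0, hE1⟩ => ?_)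
  have hlog : log E ≠ 0 := (log_neg hE0 hE1).ne
  field_simp
  ring
end

section
/- (BPSK asymptotically attains the ultimate Holevo limit at low photon number.) Let g(x) = (1+x) ln(1+x) - x ln x and let h(x) = -x ln x - (1-x) ln(1-x) (binary entropy in nats, 0 ln 0 = 0), so that the BPSK Holevo capacity is C∞(E) = h((1 + e^{-2E})/2). Then lim_{E → 0⁺} ( g(E) - C∞(E) ) / E = 0, i.e. the per-photon gap between the ultimate Holevo capacity and the BPSK Holevo capacity vanishes as E → 0⁺. -/
/-!
Write `q = (1 - e^{-2E})/2` and `p = 1 - q`, so that `h(p) = -p ln p - q ln q` and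
`(g(E) - h(p))/E = (1+E) ln(1+E)/E + p ln p/E + (q ln q/E - ln E)`.
The first two terms are difference quotients at `0` of `f ln f` with `f(0) = 1`, so they tend
to `f'(0)`, namely `1` and `-1`. In the third, the entropy singularity `-ln E` cancels:
`q/E = 1 + O(E)`, so `q ln q/E - ln E = (q/E) ln(q/E) + (q/E - 1) ln E → 0` since `E ln E → 0`.
-/

open Filter Topology Real Asymptotics

lemma tendsto_div_self_nhdsGT_zero_of_hasDerivAt {f : ℝ → ℝ} {c : ℝ} (hf : HasDerivAt f c 0)
    (hf0 : f 0 = 0) : Tendsto (fun x => f x / x) (𝓝[>] 0) (𝓝 c) := by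
  simpa [hf0, div_eq_inv_mul] using hf.tendsto_slope_zero_right

lemma tendsto_mul_log_div_self_nhdsGT_zero {f : ℝ → ℝ} {c : ℝ} (hf : HasDerivAt f c 0)
    (hf0 : f 0 = 1) : Tendsto (fun x => f x * log (f x) / x) (𝓝[>] 0) (𝓝 c) := by
  have hmul_log : HasDerivAt (fun y => y * log y) 1 (f 0) := by
    simpa [hf0] using hasDerivAt_mul_log (x := f 0) (by simp [hf0])
  simpa using tendsto_div_self_nhdsGT_zero_of_hasDerivAt (hmul_log.comp 0 hf) (by simp [hf0])

lemma tendsto_mul_log_div_self_sub_log {u : ℝ → ℝ}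
    (hu : (fun x => u x / x - 1) =O[𝓝[>] 0] id) :
    Tendsto (fun x => u x * log (u x) / x - log x) (𝓝[>] 0) (𝓝 0) := by
  have hid : Tendsto (id : ℝ → ℝ) (𝓝[>] 0) (𝓝 0) := tendsto_nhdsWithin_of_tendsto_nhds tendsto_id
  have hratio : Tendsto (fun x => u x / x) (𝓝[>] 0) (𝓝 1) := by
    simpa using (hu.trans_tendsto hid).add_const 1
  have hmul_log : Tendsto (fun x => u x / x * log (u x / x)) (𝓝[>] 0) (𝓝 0) :=
    (continuous_mul_log.tendsto' 1 0 (by simp)).comp hratio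
  have hx_log : Tendsto (fun x : ℝ => x * log x) (𝓝[>] 0) (𝓝 0) := by
    simpa using (continuous_mul_log.tendsto 0).mono_left nhdsWithin_le_nhds
  have hdefect : Tendsto (fun x => (u x / x - 1) * log x) (𝓝[>] 0) (𝓝 0) :=
    (hu.mul (isBigO_refl log _)).trans_tendsto hx_log
  refine (add_zero (0 : ℝ) ▸ hmul_log.add hdefect).congr' ?_
  -- `u ln u / x - ln x = (u/x) ln (u/x) + (u/x - 1) ln x`, also when `u x = 0`
  filter_upwards [self_mem_nhdsWithin] with x (hx : 0 < x)
  rcases eq_or_ne (u x) 0 with hux | hux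
  · simp [hux]
  · rw [log_div hux hx.ne']
    field_simp
    ring

lemma isBigO_one_sub_exp_neg_two_mul_div_two_div_sub_one :
    (fun x : ℝ => (1 - exp (-(2 * x))) / 2 / x - 1) =O[𝓝[>] 0] id := by
  refine IsBigO.of_bound 2 ?_
  have hsmall : ∀ᶠ x : ℝ in 𝓝[>] 0, x < 1 / 2 :=
    nhdsWithin_le_nhds (Iio_mem_nhds (by norm_num))
  filter_upwards [self_mem_nhdsWithin, hsmall] with x (hx : 0 < x) hx2
  have htaylor := abs_exp_sub_one_sub_id_le (x := -(2 * x))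
    (by rw [abs_le]; constructor <;> linarith)
  have hrw : (1 - exp (-(2 * x))) / 2 / x - 1 = -(exp (-(2 * x)) - 1 - -(2 * x)) / (2 * x) := by
    field_simp
    ring
  rw [Real.norm_eq_abs, Real.norm_eq_abs, hrw, abs_div, abs_neg,
    abs_of_pos (by positivity : 0 < 2 * x), div_le_iff₀ (by positivity), id, abs_of_pos hx]
  nlinarith

/-- BPSK asymptotically attains the ultimate Holevo limit at low photon number:
`(g(E) - C∞(E))/E → 0` as `E → 0⁺`, where `g(E) = (1+E) ln(1+E) - E ln E` and
`C∞(E) = h((1 + e^{-2E})/2)`. -/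
theorem bpsk_attains_ultimate_holevo_low_photon :
    Tendsto
      (fun E : ℝ =>
        (((1 + E) * Real.log (1 + E) - E * Real.log E)
          - Real.binEntropy ((1 + Real.exp (-(2 * E))) / 2)) / E)
      (𝓝[>] 0) (𝓝 0) := by
  have hp : HasDerivAt (fun x : ℝ => (1 + exp (-(2 * x))) / 2) (-1) 0 :=
    ((((hasDerivAt_id' (0 : ℝ)).const_mul 2).fun_neg.exp.const_add 1).div_const 2).congr_deriv
      (by norm_num)
  have hlog_one_add := tendsto_mul_log_div_self_nhdsGT_zero ((hasDerivAt_id' (0 : ℝ)).const_add 1)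
    (by simp)
  have hlog_p := tendsto_mul_log_div_self_nhdsGT_zero hp (by simp)
  have hlog_q :=
    tendsto_mul_log_div_self_sub_log isBigO_one_sub_exp_neg_two_mul_div_two_div_sub_one
  have hsum := (hlog_one_add.add hlog_p).add hlog_q
  rw [show (1 : ℝ) + -1 + 0 = 0 by norm_num] at hsum
  refine hsum.congr' ?_
  filter_upwards [self_mem_nhdsWithin] with E (hE : 0 < E)
  rw [binEntropy_eq_negMulLog_add_negMulLog_one_sub, negMulLog, negMulLog,
    show 1 - (1 + exp (-(2 * E))) / 2 = (1 - exp (-(2 * E))) / 2 by ring]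
  field_simp
  ring
end
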